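/- arXiv:0906.4499 — 2 statements merged into one kernel-verified Lean document; each statement's English description precedes it below -/
import Mathlib

section
/- Let ℓ be an ordered special length vector of type {n−4,n−3,n−2}. Then the k-th Betti number of the planar polygon space M_ℓ satisfies b₁(M_ℓ) = n+3 and b₂(M_ℓ) = C(n−5,2) + 8(n−5) + 1, using Walker's formula b_k(M_ℓ) = |Ṡ_k(ℓ)| + |Ṡ_{n−3−k}(ℓ)|. -/
open Finset

/-- The sum of `ℓ` over `J` is less than the sum over the complement in `{1,…,n}`. -/
def Short (n : ℕ) (ℓ : ℕ → ℝ) (J : Finset ℕ) : Prop :=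
  ∑ j ∈ J, ℓ j < ∑ j ∈ Finset.Icc 1 n \ J, ℓ j

/-- `J` is long iff its complement in `{1,…,n}` is short. -/
def Long (n : ℕ) (ℓ : ℕ → ℝ) (J : Finset ℕ) : Prop :=
  Short n ℓ (Finset.Icc 1 n \ J)

/-- All entries positive. -/
def LengthVec (n : ℕ) (ℓ : ℕ → ℝ) : Prop := ∀ i ∈ Finset.Icc 1 n, 0 < ℓ i

/-- `ℓ₁ ≤ … ≤ ℓₙ`. -/
def OrderedVec (n : ℕ) (ℓ : ℕ → ℝ) : Prop :=
  ∀ i j : ℕ, 1 ≤ i → i ≤ j → j ≤ n → ℓ i ≤ ℓ j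

/-- No subset has sum equal to the sum of its complement. -/
def Generic (n : ℕ) (ℓ : ℕ → ℝ) : Prop :=
  ∀ J ⊆ Finset.Icc 1 n, ∑ j ∈ J, ℓ j ≠ ∑ j ∈ Finset.Icc 1 n \ J, ℓ j

/-- Dominance order: an injective order-preserving map `φ : J₁ → J₂` with `x ≤ φ x`. -/
def DomLe (J₁ J₂ : Finset ℕ) : Prop :=
  ∃ φ : ℕ → ℕ, Set.InjOn φ ↑J₁ ∧ (∀ x ∈ J₁, φ x ∈ J₂) ∧
    (∀ x ∈ J₁, ∀ y ∈ J₁, x < y → φ x < φ y) ∧ ∀ x ∈ J₁, x ≤ φ x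

/-- `Ṡ_k(ℓ)`: subsets `J ⊆ {1,…,n−1}` of cardinality `k` with `J ∪ {n}` short. -/
def SdotSet (n : ℕ) (ℓ : ℕ → ℝ) (k : ℕ) : Set (Finset ℕ) :=
  {J | J ⊆ Finset.Icc 1 (n-1) ∧ J.card = k ∧ Short n ℓ (insert n J)}

/-- `Ṡ(ℓ)`: subsets `J ⊆ {1,…,n−1}` with `J ∪ {n}` short. -/
def Sdot (n : ℕ) (ℓ : ℕ → ℝ) : Set (Finset ℕ) :=
  {J | J ⊆ Finset.Icc 1 (n-1) ∧ Short n ℓ (insert n J)}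

/-- Special: `Ṡ_{n−3}(ℓ) = ∅ ≠ Ṡ_{n−4}(ℓ)`. -/
def SpecialVec (n : ℕ) (ℓ : ℕ → ℝ) : Prop :=
  SdotSet n ℓ (n-3) = ∅ ∧ SdotSet n ℓ (n-4) ≠ ∅

/-- `T` is the type of `ℓ`: the minimal three-element long subset of `{1,…,n−1}`. -/
def IsType (n : ℕ) (ℓ : ℕ → ℝ) (T : Finset ℕ) : Prop :=
  T ⊆ Finset.Icc 1 (n-1) ∧ T.card = 3 ∧ Long n ℓ T ∧
    ∀ T' ⊆ Finset.Icc 1 (n-1), T'.card = 3 → Long n ℓ T' → DomLe T T'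

/-!
Since `ℓ` is ordered, any three indices among `n-4, …, n` carry at least the weight of the type
triple `{n-4, n-3, n-2}`, which is long. Hence, for `J ⊆ {1,…,n-1}`, the set `J ∪ {n}` is long as
soon as `J` contains two of the four top indices `n-4, …, n-1`, and short otherwise (then its
complement contains three of them). So `Ṡ_k(ℓ)` consists of the `k`-subsets of `{1,…,n-1}` meeting
the top block in at most one index, and there are `C(n-5, k) + 4 C(n-5, k-1)` of them.
-/

section Counting

variable {α : Type*} [DecidableEq α] {A B : Finset α}

theorem filter_powersetCard_card_inter_le_one_eq (hAB : Disjoint A B) (k : ℕ) :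
    {J ∈ powersetCard (k + 1) (A ∪ B) | #(J ∩ B) ≤ 1} =
      powersetCard (k + 1) A ∪ (B ×ˢ powersetCard k A).image (fun p => insert p.1 p.2) := by
  ext J
  simp only [mem_filter, mem_powersetCard, mem_union, mem_image, mem_product, Prod.exists]
  constructor
  · rintro ⟨⟨hJ, hcard⟩, hB⟩
    have hJA : ∀ x ∈ J, x ∉ B → x ∈ A := fun x hx hxB =>
      (mem_union.mp (hJ hx)).resolve_right hxB
    rcases Nat.le_one_iff_eq_zero_or_eq_one.mp hB with h0 | h1
    · refine .inl ⟨fun x hx => hJA x hx fun hxB => ?_, hcard⟩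
      simpa [card_eq_zero.mp h0] using mem_inter.mpr ⟨hx, hxB⟩
    · obtain ⟨b, hb⟩ := card_eq_one.mp h1
      obtain ⟨hbJ, hbB⟩ := mem_inter.mp (hb ▸ mem_singleton_self b)
      refine .inr ⟨b, J.erase b, ⟨hbB, fun x hx => ?_, ?_⟩, insert_erase hbJ⟩
      · obtain ⟨hxb, hxJ⟩ := mem_erase.mp hx
        exact hJA x hxJ fun hxB => hxb (mem_singleton.mp (hb ▸ mem_inter.mpr ⟨hxJ, hxB⟩))
      · rw [card_erase_of_mem hbJ, hcard, Nat.add_sub_cancel]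
  · rintro (⟨hJ, hcard⟩ | ⟨b, J, ⟨hb, hJ, hcard⟩, rfl⟩)
    · refine ⟨⟨hJ.trans subset_union_left, hcard⟩, ?_⟩
      simp [disjoint_iff_inter_eq_empty.mp (hAB.mono_left hJ)]
    · have hbJ : b ∉ J := fun h => disjoint_left.mp hAB (hJ h) hb
      refine ⟨⟨insert_subset (mem_union_right _ hb) (hJ.trans subset_union_left), ?_⟩, ?_⟩
      · rw [card_insert_of_notMem hbJ, hcard]
      · rw [insert_inter_of_mem hb, disjoint_iff_inter_eq_empty.mp (hAB.mono_left hJ)]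
        simp

theorem card_filter_powersetCard_card_inter_le_one (hAB : Disjoint A B) {k : ℕ} (hk : 0 < k) :
    #{J ∈ powersetCard k (A ∪ B) | #(J ∩ B) ≤ 1} = (#A).choose k + #B * (#A).choose (k - 1) := by
  obtain ⟨k, rfl⟩ : ∃ j, k = j + 1 := ⟨k - 1, by omega⟩
  have hinter : ∀ p ∈ B ×ˢ powersetCard k A, insert p.1 p.2 ∩ B = {p.1} := by
    rintro ⟨b, J⟩ hp
    obtain ⟨hb, hJ⟩ := mem_product.mp hp
    rw [insert_inter_of_mem hb,
      disjoint_iff_inter_eq_empty.mp (hAB.mono_left (mem_powersetCard.mp hJ).1)]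
    rfl
  have hinj : Set.InjOn (fun p : α × Finset α => insert p.1 p.2) ↑(B ×ˢ powersetCard k A) := by
    rintro ⟨b, J⟩ hp ⟨b', J'⟩ hp' heq
    have hbb : b = b' := by simpa [heq, hinter _ hp'] using (hinter _ hp).symm
    subst hbb
    have hnot : ∀ {J : Finset α}, J ⊆ A → b ∉ J := fun hJ h =>
      disjoint_left.mp hAB (hJ h) (mem_product.mp hp).1
    simp only [coe_product, Set.mem_prod, mem_coe, mem_powersetCard] at hp hp' heq
    rw [← erase_insert (hnot hp.2.1), heq, erase_insert (hnot hp'.2.1)]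
  have hdisj : Disjoint (powersetCard (k + 1) A)
      ((B ×ˢ powersetCard k A).image (fun p => insert p.1 p.2)) := by
    refine disjoint_left.mpr fun J hJA hJ => ?_
    obtain ⟨⟨b, J'⟩, hp, rfl⟩ := mem_image.mp hJ
    exact disjoint_left.mp hAB ((mem_powersetCard.mp hJA).1 (mem_insert_self b J'))
      (mem_product.mp hp).1
  rw [filter_powersetCard_card_inter_le_one_eq hAB, card_union_of_disjoint hdisj,
    card_image_of_injOn hinj, card_product, card_powersetCard, card_powersetCard,
    Nat.add_sub_cancel]

end Counting

section TypeTriple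

variable {n : ℕ} {ℓ : ℕ → ℝ}

theorem short_iff_two_mul_sum_lt {J : Finset ℕ} (hJ : J ⊆ Icc 1 n) :
    Short n ℓ J ↔ 2 * ∑ j ∈ J, ℓ j < ∑ j ∈ Icc 1 n, ℓ j := by
  have h := sum_sdiff (f := ℓ) hJ
  unfold Short
  constructor <;> intro <;> linarith

theorem long_iff_sum_lt_two_mul {J : Finset ℕ} (hJ : J ⊆ Icc 1 n) :
    Long n ℓ J ↔ ∑ j ∈ Icc 1 n, ℓ j < 2 * ∑ j ∈ J, ℓ j := by
  have h := sum_sdiff (f := ℓ) hJ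
  rw [Long, short_iff_two_mul_sum_lt sdiff_subset]
  constructor <;> intro <;> linarith

theorem sum_type_le_sum_of_subset (hn : 5 ≤ n) (hord : OrderedVec n ℓ) {L : Finset ℕ}
    (hL : L ⊆ Icc (n-4) n) (hcard : #L = 3) :
    ∑ j ∈ {n-4, n-3, n-2}, ℓ j ≤ ∑ j ∈ L, ℓ j := by
  obtain ⟨x, y, hxy, hcompl⟩ : ∃ x y, x ≠ y ∧ Icc (n-4) n \ L = {x, y} :=
    card_eq_two.mp (by rw [card_sdiff_of_subset hL, Nat.card_Icc, hcard]; omega)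
  have hx : x ∈ Icc (n-4) n := (mem_sdiff.mp (hcompl ▸ mem_insert_self x {y})).1
  have hy : y ∈ Icc (n-4) n :=
    (mem_sdiff.mp (hcompl ▸ mem_insert_of_mem (mem_singleton_self y))).1
  rw [mem_Icc] at hx hy
  have hxy_le : ℓ x + ℓ y ≤ ℓ (n-1) + ℓ n := by
    rcases hxy.lt_or_gt with h | h
    · linarith [hord x (n-1) (by omega) (by omega) (by omega), hord y n (by omega) hy.2 le_rfl]
    · linarith [hord y (n-1) (by omega) (by omega) (by omega), hord x n (by omega) hx.2 le_rfl]
  have hsplit : Icc (n-4) n = {n-4, n-3, n-2} ∪ {n-1, n} := by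
    ext; simp only [mem_Icc, mem_union, mem_insert, mem_singleton]; omega
  have hsum := sum_sdiff (f := ℓ) hL
  rw [hcompl, sum_pair hxy, hsplit, sum_union (by simp; omega), sum_pair (by omega)] at hsum
  linarith

theorem sum_Icc_lt_two_mul_sum_type (hn : 5 ≤ n) (hT : Long n ℓ {n-4, n-3, n-2}) :
    ∑ j ∈ Icc 1 n, ℓ j < 2 * ∑ j ∈ {n-4, n-3, n-2}, ℓ j :=
  (long_iff_sum_lt_two_mul
    (by intro x; simp only [mem_insert, mem_singleton, mem_Icc]; omega)).mp hT

theorem insert_subset_Icc {J : Finset ℕ} (hJ : J ⊆ Icc 1 (n-1)) (hn : 1 ≤ n) :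
    insert n J ⊆ Icc 1 n :=
  insert_subset (right_mem_Icc.mpr hn) (hJ.trans (Icc_subset_Icc_right (Nat.sub_le n 1)))

theorem short_insert_of_card_inter_le_one (hn : 5 ≤ n) (hpos : LengthVec n ℓ)
    (hord : OrderedVec n ℓ) (hT : Long n ℓ {n-4, n-3, n-2}) {J : Finset ℕ}
    (hJ : J ⊆ Icc 1 (n-1)) (h : #(J ∩ Icc (n-4) (n-1)) ≤ 1) : Short n ℓ (insert n J) := by
  have hJn := insert_subset_Icc hJ (by omega)
  obtain ⟨L, hL, hLcard⟩ : ∃ L ⊆ Icc (n-4) (n-1) \ J, #L = 3 := by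
    refine exists_subset_card_eq ?_
    have := card_sdiff_add_card_inter (Icc (n-4) (n-1)) J
    rw [inter_comm, Nat.card_Icc] at this
    omega
  have hLtop : L ⊆ Icc (n-4) n :=
    hL.trans (sdiff_subset.trans (Icc_subset_Icc_right (Nat.sub_le n 1)))
  have hLcompl : L ⊆ Icc 1 n \ insert n J := by
    intro x hx
    obtain ⟨hxI, hxJ⟩ := mem_sdiff.mp (hL hx)
    rw [mem_Icc] at hxI
    refine mem_sdiff.mpr ⟨mem_Icc.mpr ⟨by omega, by omega⟩, ?_⟩
    rw [mem_insert, not_or]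
    exact ⟨by omega, hxJ⟩
  have hsum_L : ∑ j ∈ L, ℓ j ≤ ∑ j ∈ Icc 1 n \ insert n J, ℓ j :=
    sum_le_sum_of_subset_of_nonneg hLcompl fun i hi _ => (hpos i (sdiff_subset hi)).le
  have hsum := sum_sdiff (f := ℓ) hJn
  rw [short_iff_two_mul_sum_lt hJn]
  linarith [sum_type_le_sum_of_subset hn hord hLtop hLcard, sum_Icc_lt_two_mul_sum_type hn hT]

theorem not_short_insert_of_two_le_card_inter (hn : 5 ≤ n) (hpos : LengthVec n ℓ)
    (hord : OrderedVec n ℓ) (hT : Long n ℓ {n-4, n-3, n-2}) {J : Finset ℕ}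
    (hJ : J ⊆ Icc 1 (n-1)) (h : 2 ≤ #(J ∩ Icc (n-4) (n-1))) : ¬ Short n ℓ (insert n J) := by
  have hJn := insert_subset_Icc hJ (by omega)
  obtain ⟨a, ha, b, hb, hab⟩ := one_lt_card.mp h
  rw [mem_inter, mem_Icc] at ha hb
  have hL : {a, b, n} ⊆ insert n J := by
    simp only [insert_subset_iff, mem_insert, singleton_subset_iff, true_or, and_true]
    exact ⟨.inr ha.1, .inr hb.1⟩
  have hLtop : {a, b, n} ⊆ Icc (n-4) n := by
    intro x; simp only [mem_insert, mem_singleton, mem_Icc]; omega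
  have hLcard : #{a, b, n} = 3 := card_eq_three.mpr ⟨a, b, n, hab, by omega, by omega, rfl⟩
  have hsum_L : ∑ j ∈ {a, b, n}, ℓ j ≤ ∑ j ∈ insert n J, ℓ j :=
    sum_le_sum_of_subset_of_nonneg hL fun i hi _ => (hpos i (hJn hi)).le
  rw [short_iff_two_mul_sum_lt hJn, not_lt]
  linarith [sum_type_le_sum_of_subset hn hord hLtop hLcard, sum_Icc_lt_two_mul_sum_type hn hT]

theorem short_insert_iff_card_inter_le_one (hn : 5 ≤ n) (hpos : LengthVec n ℓ)
    (hord : OrderedVec n ℓ) (hT : Long n ℓ {n-4, n-3, n-2}) {J : Finset ℕ}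
    (hJ : J ⊆ Icc 1 (n-1)) : Short n ℓ (insert n J) ↔ #(J ∩ Icc (n-4) (n-1)) ≤ 1 :=
  ⟨fun hs => not_lt.mp fun h => not_short_insert_of_two_le_card_inter hn hpos hord hT hJ h hs,
    short_insert_of_card_inter_le_one hn hpos hord hT hJ⟩

theorem sdotSet_eq_filter_powersetCard (hn : 5 ≤ n) (hpos : LengthVec n ℓ)
    (hord : OrderedVec n ℓ) (hT : Long n ℓ {n-4, n-3, n-2}) (k : ℕ) :
    SdotSet n ℓ k = ↑{J ∈ powersetCard k (Icc 1 (n-1)) | #(J ∩ Icc (n-4) (n-1)) ≤ 1} := by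
  ext J
  simp only [SdotSet, Set.mem_ofPred_eq, coe_filter, mem_powersetCard, and_assoc]
  exact and_congr_right fun hJ => and_congr_right fun _ =>
    short_insert_iff_card_inter_le_one hn hpos hord hT hJ

theorem ncard_sdotSet (hn : 5 ≤ n) (hpos : LengthVec n ℓ) (hord : OrderedVec n ℓ)
    (hT : Long n ℓ {n-4, n-3, n-2}) {k : ℕ} (hk : 0 < k) :
    (SdotSet n ℓ k).ncard = (n-5).choose k + 4 * (n-5).choose (k-1) := by
  have hsplit : Icc 1 (n-1) = Icc 1 (n-5) ∪ Icc (n-4) (n-1) := by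
    ext; simp only [mem_Icc, mem_union]; omega
  have hdisj : Disjoint (Icc 1 (n-5)) (Icc (n-4) (n-1)) :=
    disjoint_left.mpr fun x hx hx' => by rw [mem_Icc] at hx hx'; omega
  rw [sdotSet_eq_filter_powersetCard hn hpos hord hT, Set.ncard_coe_finset, hsplit,
    card_filter_powersetCard_card_inter_le_one hdisj hk, Nat.card_Icc, Nat.card_Icc,
    show n - 5 + 1 - 1 = n - 5 by omega, show n - 1 + 1 - (n - 4) = 4 by omega]

end TypeTriple

theorem betti_low_type_general (n : ℕ) (ℓ : ℕ → ℝ) (hn : 5 ≤ n)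
    (hpos : LengthVec n ℓ) (hord : OrderedVec n ℓ)
    (hT : IsType n ℓ {n-4, n-3, n-2}) :
    (SdotSet n ℓ 1).ncard + (SdotSet n ℓ (n-4)).ncard = n + 3 ∧
    (SdotSet n ℓ 2).ncard + (SdotSet n ℓ (n-5)).ncard
      = Nat.choose (n-5) 2 + 8*(n-5) + 1 := by
  have hcount := fun {k} => ncard_sdotSet (k := k) hn hpos hord hT.2.2.1
  have hlast : (SdotSet n ℓ (n-5)).ncard = 4 * (n-5) + 1 := by
    rcases (n-5).eq_zero_or_pos with h | h
    · rw [h, sdotSet_eq_filter_powersetCard hn hpos hord hT.2.2.1, Set.ncard_coe_finset]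
      simp [filter_singleton]
    · obtain ⟨m, hm⟩ : ∃ m, n - 5 = m + 1 := ⟨n - 6, by omega⟩
      rw [hcount h, hm, Nat.choose_self, Nat.add_sub_cancel, Nat.choose_succ_self_right]
      ring
  refine ⟨?_, ?_⟩
  · rw [hcount one_pos, hcount (by omega : 0 < n - 4), Nat.choose_one_right,
      Nat.choose_eq_zero_of_lt (by omega : n - 5 < n - 4), show n - 4 - 1 = n - 5 by omega,
      Nat.choose_self, Nat.sub_self, Nat.choose_zero_right]
    omega
  · rw [hcount two_pos, hlast, show 2 - 1 = 1 from rfl, Nat.choose_one_right]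
    ring

/-- Betti numbers b₁ and b₂ of the planar polygon space for type
{n−4,n−3,n−2}, via Walker's formula b_k = |Ṡ_k(ℓ)| + |Ṡ_{n−3−k}(ℓ)|. -/
theorem betti_low_type (n : ℕ) (ℓ : ℕ → ℝ) (hn : 5 ≤ n)
    (hpos : LengthVec n ℓ) (hord : OrderedVec n ℓ) (hgen : Generic n ℓ)
    (hspec : SpecialVec n ℓ) (hT : IsType n ℓ {n-4, n-3, n-2}) :
    (SdotSet n ℓ 1).ncard + (SdotSet n ℓ (n-4)).ncard = n + 3 ∧
    (SdotSet n ℓ 2).ncard + (SdotSet n ℓ (n-5)).ncard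
      = Nat.choose (n-5) 2 + 8*(n-5) + 1 :=
  betti_low_type_general n ℓ hn hpos hord hT
end

section
/- Let ℓ be an ordered special length vector of type {i, n−2, n−1} with 1 ≤ i ≤ n−4. Then |Ṡ_{n−4}(ℓ)| = n−2−i. -/
open Finset

/-!
Complementation in `{1,…,n−1}` turns `Ṡ_{n−4}(ℓ)` into the set of long three-element subsets
of `{1,…,n−1}`. Every such subset dominates the type `{i, n−2, n−1}`, which forces it to be
`{a, n−2, n−1}` with `i ≤ a ≤ n−3`; conversely each of these is long because `ℓ` is ordered.
This leaves `n − 2 − i` choices of `a`.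
-/

variable {n : ℕ} {ℓ : ℕ → ℝ}

def LongSubsets (n : ℕ) (ℓ : ℕ → ℝ) (k : ℕ) : Set (Finset ℕ) :=
  {T | T ⊆ Icc 1 (n-1) ∧ T.card = k ∧ Long n ℓ T}

lemma long_iff_sum_lt {T : Finset ℕ} (hT : T ⊆ Icc 1 n) :
    Long n ℓ T ↔ ∑ j ∈ Icc 1 n, ℓ j < 2 * ∑ j ∈ T, ℓ j := by
  rw [Long, Short, Finset.sdiff_sdiff_eq_self hT, ← sum_sdiff hT]
  constructor <;> intro h <;> linarith

lemma Long.of_sum_le {T T' : Finset ℕ} (hT : T ⊆ Icc 1 n) (hT' : T' ⊆ Icc 1 n)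
    (hle : ∑ j ∈ T, ℓ j ≤ ∑ j ∈ T', ℓ j) (h : Long n ℓ T) : Long n ℓ T' := by
  rw [long_iff_sum_lt hT] at h
  rw [long_iff_sum_lt hT']
  linarith

lemma insert_eq_Icc_sdiff_sdiff (hn : 0 < n) {J : Finset ℕ} (hJ : J ⊆ Icc 1 (n-1)) :
    insert n J = Icc 1 n \ (Icc 1 (n-1) \ J) := by
  ext x
  have hx := @hJ x
  simp only [mem_insert, mem_sdiff, mem_Icc] at hx ⊢
  by_cases x ∈ J <;> simp_all <;> omega

lemma short_insert_top_iff_long (hn : 0 < n) {J : Finset ℕ} (hJ : J ⊆ Icc 1 (n-1)) :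
    Short n ℓ (insert n J) ↔ Long n ℓ (Icc 1 (n-1) \ J) := by
  rw [Long, insert_eq_Icc_sdiff_sdiff hn hJ]

lemma sdotSet_eq_image_sdiff (hn : 0 < n) {k : ℕ} (hk : k ≤ n - 1) :
    SdotSet n ℓ k = (Icc 1 (n-1) \ ·) '' LongSubsets n ℓ (n - 1 - k) := by
  ext J
  constructor
  · rintro ⟨hJ, hcard, hshort⟩
    refine ⟨Icc 1 (n-1) \ J, ⟨sdiff_subset, ?_, (short_insert_top_iff_long hn hJ).1 hshort⟩,
      Finset.sdiff_sdiff_eq_self hJ⟩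
    rw [card_sdiff_of_subset hJ, Nat.card_Icc, hcard]
    omega
  · rintro ⟨T, ⟨hT, hcard, hlong⟩, rfl⟩
    refine ⟨sdiff_subset, ?_, ?_⟩
    · rw [card_sdiff_of_subset hT, Nat.card_Icc, hcard]
      omega
    · rwa [short_insert_top_iff_long hn sdiff_subset, Finset.sdiff_sdiff_eq_self hT]

lemma ncard_sdotSet_s12 (hn : 0 < n) {k : ℕ} (hk : k ≤ n - 1) :
    (SdotSet n ℓ k).ncard = (LongSubsets n ℓ (n - 1 - k)).ncard := by
  rw [sdotSet_eq_image_sdiff hn hk]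
  refine Set.InjOn.ncard_image fun T hT T' hT' h => ?_
  rw [← Finset.sdiff_sdiff_eq_self hT.1, ← Finset.sdiff_sdiff_eq_self hT'.1]
  exact congrArg (Icc 1 (n-1) \ ·) h

lemma eq_triple_of_domLe {i : ℕ} {T : Finset ℕ} (hi : i < n - 2) (hT : ∀ x ∈ T, x ≤ n - 1)
    (hcard : T.card = 3) (h : DomLe {i, n-2, n-1} T) :
    ∃ a, i ≤ a ∧ a < n - 2 ∧ T = {a, n-2, n-1} := by
  obtain ⟨φ, -, hmem, hmono, hle⟩ := h
  have hi_mem : i ∈ ({i, n-2, n-1} : Finset ℕ) := by simp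
  have h2_mem : n-2 ∈ ({i, n-2, n-1} : Finset ℕ) := by simp
  have h1_mem : n-1 ∈ ({i, n-2, n-1} : Finset ℕ) := by simp
  -- `φ` can only push the two top elements upwards, but there is no room above them.
  have hφ1 : φ (n-1) = n-1 := le_antisymm (hT _ (hmem _ h1_mem)) (hle _ h1_mem)
  have hφ2 : φ (n-2) = n-2 := by
    have := hmono _ h2_mem _ h1_mem (by omega)
    have := hle _ h2_mem
    omega
  have hφi : φ i < n - 2 := hφ2 ▸ hmono _ hi_mem _ h2_mem (by omega)
  refine ⟨φ i, hle _ hi_mem, hφi, (eq_of_subset_of_card_le ?_ ?_).symm⟩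
  · intro x
    simp only [mem_insert, mem_singleton]
    rintro (rfl | rfl | rfl)
    · exact hmem _ hi_mem
    · exact hφ2 ▸ hmem _ h2_mem
    · exact hφ1 ▸ hmem _ h1_mem
  · rw [hcard, card_insert_of_notMem (by simp; omega), card_pair (by omega)]

lemma longSubsets_three_eq_image {i : ℕ} (hi1 : 1 ≤ i) (hi : i < n - 2) (hord : OrderedVec n ℓ)
    (hT : IsType n ℓ {i, n-2, n-1}) :
    LongSubsets n ℓ 3 = (fun a => {a, n-2, n-1}) '' Set.Icc i (n-3) := by
  obtain ⟨hT_sub, -, hT_long, hT_min⟩ := hT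
  ext T
  constructor
  · rintro ⟨hT', hcard, hlong⟩
    obtain ⟨a, hia, han, rfl⟩ := eq_triple_of_domLe hi (fun x hx => (mem_Icc.1 (hT' hx)).2)
      hcard (hT_min T hT' hcard hlong)
    exact ⟨a, ⟨hia, by omega⟩, rfl⟩
  · rintro ⟨a, ⟨hia, han⟩, rfl⟩
    have ha_sub : ({a, n-2, n-1} : Finset ℕ) ⊆ Icc 1 (n-1) := by
      intro x
      simp only [mem_insert, mem_singleton, mem_Icc]
      rintro (rfl | rfl | rfl) <;> omega
    refine ⟨ha_sub, by rw [card_insert_of_notMem (by simp; omega), card_pair (by omega)], ?_⟩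
    refine Long.of_sum_le (hT_sub.trans (Icc_subset_Icc_right (by omega)))
      (ha_sub.trans (Icc_subset_Icc_right (by omega))) ?_ hT_long
    dsimp only
    rw [sum_insert (a := i) (by simp; omega), sum_insert (a := a) (by simp; omega)]
    exact add_le_add_left (hord i a hi1 hia (by omega)) _

theorem sdot_card_type_i_general (n i : ℕ) (ℓ : ℕ → ℝ)
    (hi1 : 1 ≤ i) (hi2 : i ≤ n-4)
    (hord : OrderedVec n ℓ) (hT : IsType n ℓ {i, n-2, n-1}) :
    (SdotSet n ℓ (n-4)).ncard = n - 2 - i := by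
  have h_three : n - 1 - (n - 4) = 3 := by omega
  rw [ncard_sdotSet_s12 (by omega) (by omega), h_three,
    longSubsets_three_eq_image hi1 (by omega) hord hT, Set.InjOn.ncard_image, Set.ncard_Icc_nat]
  · omega
  · intro a ha b hb hab
    have : a ∈ ({b, n-2, n-1} : Finset ℕ) := by simp only at hab; exact hab ▸ mem_insert_self a _
    simp only [mem_insert, mem_singleton] at this
    simp only [Set.mem_Icc] at ha hb
    omega

/-- For type {i,n−2,n−1} with 1 ≤ i ≤ n−4, |Ṡ_{n−4}(ℓ)| = n−2−i. -/
theorem sdot_card_type_i (n i : ℕ) (ℓ : ℕ → ℝ) (hn : 5 ≤ n)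
    (hi1 : 1 ≤ i) (hi2 : i ≤ n-4)
    (hpos : LengthVec n ℓ) (hord : OrderedVec n ℓ) (hgen : Generic n ℓ)
    (hspec : SpecialVec n ℓ) (hT : IsType n ℓ {i, n-2, n-1}) :
    (SdotSet n ℓ (n-4)).ncard = n - 2 - i :=
  sdot_card_type_i_general n i ℓ hi1 hi2 hord hT
end
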